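/- Minkowski space-time is non-totally-imprisoning: if c : [0,∞) → 𝕄 is a future-directed causal curve parametrized by Euclidean arc length, then for every compact set K ⊆ 𝕄 there exists s₀ ≥ 0 such that c(s) ∉ K for all s ≥ s₀ (an endless causal curve cannot hover around in a compact set). -/

import Mathlib

noncomputable section

open Set Filter

/-- Minkowski space-time `𝕄 = ℝ × EuclideanSpace ℝ (Fin 3)`, equipped with the Euclidean
norm `‖(t,x)‖ = √(t² + ‖x‖²)` (i.e. the `L²` product norm). -/
abbrev Mink : Type := WithLp 2 (ℝ × EuclideanSpace ℝ (Fin 3))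

/-- The future causal cone `C = {(t,x) : ‖x‖ ≤ t}`. -/
def causalCone : Set Mink := {p | ‖p.ofLp.2‖ ≤ p.ofLp.1}

/-- The future chronological cone `C° = {(t,x) : ‖x‖ < t}` (the interior of `C`). -/
def chronCone : Set Mink := {p | ‖p.ofLp.2‖ < p.ofLp.1}

/-- `causalLE x y` (written `x ≤ y`): `x` causally precedes `y`, i.e. `y - x ∈ C`. -/
def causalLE (x y : Mink) : Prop := y - x ∈ causalCone

/-- `chronLT x y` (written `x ≪ y`): `x` chronologically precedes `y`, i.e. `y - x ∈ C°`. -/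
def chronLT (x y : Mink) : Prop := y - x ∈ chronCone

/-- The chronological past `I⁻(x) = {z : z ≪ x}`. -/
def Iminus (x : Mink) : Set Mink := {z | chronLT z x}

/-- The causal past `J⁻(x) = {z : z ≤ x}`. -/
def Jminus (x : Mink) : Set Mink := {z | causalLE z x}

/-- The causal future `J⁺(x) = {z : x ≤ z}`. -/
def Jplus (x : Mink) : Set Mink := {z | causalLE x z}

/-- A future-directed causal curve on an interval `I ⊆ ℝ`: a continuous map `c : I → 𝕄`
such that `c t - c s ∈ C` and `c s ≠ c t` whenever `s < t` in `I`. -/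
def IsFDCausalOn (c : ℝ → Mink) (I : Set ℝ) : Prop :=
  ContinuousOn c I ∧ ∀ s ∈ I, ∀ t ∈ I, s < t → c t - c s ∈ causalCone ∧ c s ≠ c t

/-!
Along a future-directed causal curve the time coordinate is nondecreasing, and a causal vector
`(t, x)` has Euclidean norm `√(t² + ‖x‖²) ≤ √2 t`. Hence the Euclidean length of the curve on
`[0, s]` is at most `√2 (t(c s) - t(c 0))`. For an arc-length parametrization this gives
`t(c s) ≥ t(c 0) + s / √2`, which eventually exceeds the bound of the time coordinate on any
compact set.
-/

lemma fst_nonneg_of_mem_causalCone {p : Mink} (hp : p ∈ causalCone) : 0 ≤ p.ofLp.1 :=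
  (norm_nonneg _).trans hp

lemma norm_le_sqrt_two_mul_fst_of_mem_causalCone {p : Mink} (hp : p ∈ causalCone) :
    ‖p‖ ≤ √2 * p.ofLp.1 := by
  have ht := fst_nonneg_of_mem_causalCone hp
  refine le_of_sq_le_sq ?_ (by positivity)
  have hspace : ‖p.ofLp.2‖ ≤ p.ofLp.1 := hp
  rw [WithLp.prod_norm_sq_eq_of_L2, mul_pow, Real.sq_sqrt zero_le_two, WithLp.fst,
    WithLp.snd, Real.norm_of_nonneg ht]
  nlinarith [norm_nonneg p.ofLp.2]

theorem eVariationOn_le_of_edist_le {α E F : Type*} [LinearOrder α] [PseudoEMetricSpace E]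
    [PseudoEMetricSpace F] {f : α → E} {g : α → F} {s : Set α}
    (h : ∀ x ∈ s, ∀ y ∈ s, x ≤ y → edist (f y) (f x) ≤ edist (g y) (g x)) :
    eVariationOn f s ≤ eVariationOn g s :=
  iSup_le fun ⟨_, _, hu, us⟩ =>
    (Finset.sum_le_sum fun i _ => h _ (us i) _ (us (i + 1)) (hu i.le_succ)).trans
      (eVariationOn.sum_le hu us)

namespace IsFDCausalOn

variable {c : ℝ → Mink} {I : Set ℝ}

lemma monotoneOn_time (hc : IsFDCausalOn c I) : MonotoneOn (fun s => (c s).ofLp.1) I := by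
  intro a ha b hb hab
  rcases hab.eq_or_lt with rfl | hlt
  · rfl
  · exact sub_nonneg.mp (fst_nonneg_of_mem_causalCone (hc.2 a ha b hb hlt).1)

lemma edist_le_sqrt_two_mul_time (hc : IsFDCausalOn c I) {a b : ℝ} (ha : a ∈ I) (hb : b ∈ I)
    (hab : a ≤ b) :
    edist (c b) (c a) ≤ edist (√2 * (c b).ofLp.1) (√2 * (c a).ofLp.1) := by
  rcases hab.eq_or_lt with rfl | hlt
  · simp
  have hcone := (hc.2 a ha b hb hlt).1
  have htime : (c a).ofLp.1 ≤ (c b).ofLp.1 := hc.monotoneOn_time ha hb hab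
  rw [edist_dist, edist_dist, dist_eq_norm, Real.dist_eq, ← mul_sub,
    abs_of_nonneg (mul_nonneg (Real.sqrt_nonneg 2) (sub_nonneg.mpr htime))]
  exact ENNReal.ofReal_le_ofReal (norm_le_sqrt_two_mul_fst_of_mem_causalCone hcone)

lemma eVariationOn_inter_Icc_le (hc : IsFDCausalOn c I) {a b : ℝ} (ha : a ∈ I) (hb : b ∈ I) :
    eVariationOn c (I ∩ Icc a b) ≤ .ofReal (√2 * ((c b).ofLp.1 - (c a).ofLp.1)) := by
  have hmono : MonotoneOn (fun s => √2 * (c s).ofLp.1) I :=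
    fun x hx y hy hxy => mul_le_mul_of_nonneg_left (hc.monotoneOn_time hx hy hxy) (by positivity)
  rw [mul_sub, ← hmono.eVariationOn_eq ha hb]
  exact eVariationOn_le_of_edist_le fun x hx y hy hxy =>
    hc.edist_le_sqrt_two_mul_time hx.1 hy.1 hxy

lemma le_sqrt_two_mul_time_sub (hc : IsFDCausalOn c (Ici 0))
    (harc : ∀ s : ℝ, 0 ≤ s → eVariationOn c (Icc 0 s) = .ofReal s) {s : ℝ} (hs : 0 ≤ s) :
    s ≤ √2 * ((c s).ofLp.1 - (c 0).ofLp.1) := by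
  have hvar := hc.eVariationOn_inter_Icc_le (self_mem_Ici (a := 0)) hs
  rwa [inter_eq_right.mpr Icc_subset_Ici_self, harc s hs, ENNReal.ofReal_le_ofReal_iff] at hvar
  exact mul_nonneg (by positivity) (sub_nonneg.mpr (hc.monotoneOn_time self_mem_Ici hs hs))

end IsFDCausalOn

/-- Minkowski space-time is non-totally-imprisoning: a future-directed causal curve
`c : [0,∞) → 𝕄` parametrized by Euclidean arc length eventually leaves every compact set. -/
theorem minkowski_non_totally_imprisoning (c : ℝ → Mink)
    (hc : IsFDCausalOn c (Set.Ici 0))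
    (harc : ∀ s : ℝ, 0 ≤ s → eVariationOn c (Set.Icc 0 s) = ENNReal.ofReal s) :
    ∀ K : Set Mink, IsCompact K → ∃ s₀ : ℝ, 0 ≤ s₀ ∧ ∀ s : ℝ, s₀ ≤ s → c s ∉ K := by
  intro K hK
  obtain ⟨T, hT⟩ := hK.bddAbove_image (f := fun p : Mink => p.ofLp.1) (by fun_prop)
  set t₀ := (c 0).ofLp.1
  refine ⟨max 0 (√2 * (T - t₀)) + 1, by positivity, fun s hs hsK => ?_⟩
  have hs₀ : 0 ≤ s := by linarith [le_max_left 0 (√2 * (T - t₀))]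
  have hsT : √2 * ((c s).ofLp.1 - t₀) ≤ √2 * (T - t₀) := by
    gcongr
    exact hT (mem_image_of_mem _ hsK)
  linarith [hc.le_sqrt_two_mul_time_sub harc hs₀, le_max_right 0 (√2 * (T - t₀))]
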